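/- arXiv:2311.08522 — 6 statements merged into one kernel-verified Lean document; each statement's English description precedes it below -/
import Mathlib

section
/- Let g : ℂ⁴ → ℍ(ℂ) have holomorphic Cartan-basis components, and define f(t_0,t_1,t_2,t_3) := g(z_1,z_2,z_3,z_4) where z_1 = t_0 − i t_1, z_2 = t_0 + i t_1, z_3 = −i t_2 − t_3, z_4 = −i t_2 + t_3. Then f satisfies the Cauchy–Fueter type equation ∂f/∂t_0 + I ∂f/∂t_1 + J ∂f/∂t_2 + K ∂f/∂t_3 = 0 on ℂ⁴ if and only if g satisfies the equation e_2 ∂g/∂z_1 + e_1 ∂g/∂z_2 − e_4 ∂g/∂z_3 − e_3 ∂g/∂z_4 = 0 on ℂ⁴. Indeed the operator identity ∂f/∂t_0 + I ∂f/∂t_1 + J ∂f/∂t_2 + K ∂f/∂t_3 = 2( e_2 ∂g/∂z_1 + e_1 ∂g/∂z_2 − e_4 ∂g/∂z_3 − e_3 ∂g/∂z_4 ) holds pointwise. -/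
noncomputable section

open Quaternion

/-- The quaternion units in the complex quaternion algebra ℍ(ℂ). -/
def qI : ℍ[ℂ] := ⟨0, 1, 0, 0⟩
def qJ : ℍ[ℂ] := ⟨0, 0, 1, 0⟩
def qK : ℍ[ℂ] := ⟨0, 0, 0, 1⟩

/-- The Cartan basis `e₁, e₂, e₃, e₄` of ℍ(ℂ) (indexed from 0). -/
def ee : Fin 4 → ℍ[ℂ] :=
  ![(2⁻¹ : ℂ) • (1 + Complex.I • qI),
    (2⁻¹ : ℂ) • (1 - Complex.I • qI),
    (2⁻¹ : ℂ) • (Complex.I • qJ - qK),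
    (2⁻¹ : ℂ) • (Complex.I • qJ + qK)]

/-- Componentwise complex partial derivative `∂u/∂z_j` for `u : ℂ⁴ → ℂ`. -/
def pd (j : Fin 4) (u : (Fin 4 → ℂ) → ℂ) (z : Fin 4 → ℂ) : ℂ :=
  fderiv ℂ u z (Pi.single j 1)

/-- Componentwise partial derivative `∂f/∂z_j` of the ℍ(ℂ)-valued function
with Cartan components `f 0, f 1, f 2, f 3`. -/
def Dc (f : Fin 4 → (Fin 4 → ℂ) → ℂ) (j : Fin 4) (z : Fin 4 → ℂ) : ℍ[ℂ] :=
  ∑ k, pd j (f k) z • ee k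

/-- The change of variables `z₁ = t₀ - i t₁, z₂ = t₀ + i t₁, z₃ = -i t₂ - t₃,
z₄ = -i t₂ + t₃` (indexed from 0). -/
def zmap (t : Fin 4 → ℂ) : Fin 4 → ℂ :=
  ![t 0 - Complex.I * t 1, t 0 + Complex.I * t 1,
    -Complex.I * t 2 - t 3, -Complex.I * t 2 + t 3]

/-! `zmap` is an invertible linear change of variables, and for a continuous linear equivalence the
chain rule holds with no differentiability hypothesis (both sides are `0` off the differentiable
locus). It writes `∂/∂t₀, …, ∂/∂t₃` as `∂₁ + ∂₂`, `i(∂₂ - ∂₁)`, `-i(∂₃ + ∂₄)`, `∂₄ - ∂₃` in the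
`z`-derivatives, and then `2e₁ = 1 + iI`, `2e₂ = 1 - iI`, `2e₃ = iJ - K`, `2e₄ = iJ + K` turn
`∂₀ + I∂₁ + J∂₂ + K∂₃` into twice the Cartan operator. Since `zmap` is onto, one equation holds
everywhere iff the other does. -/

open Complex

lemma fderiv_apply_eq_sum_pd (u : (Fin 4 → ℂ) → ℂ) (z v : Fin 4 → ℂ) :
    fderiv ℂ u z v = ∑ l, v l * pd l u z := by
  conv_lhs => rw [pi_eq_sum_univ' v, map_sum]
  simp only [map_smul, smul_eq_mul, pd]

lemma pd_comp_continuousLinearEquiv (L : (Fin 4 → ℂ) ≃L[ℂ] (Fin 4 → ℂ))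
    (u : (Fin 4 → ℂ) → ℂ) (j : Fin 4) (t : Fin 4 → ℂ) :
    pd j (u ∘ L) t = ∑ l, L (Pi.single j 1) l * pd l u (L t) := by
  rw [pd, L.comp_right_fderiv, ContinuousLinearMap.comp_apply, ContinuousLinearEquiv.coe_coe,
    fderiv_apply_eq_sum_pd]

lemma Dc_comp_continuousLinearEquiv (L : (Fin 4 → ℂ) ≃L[ℂ] (Fin 4 → ℂ))
    (g : Fin 4 → (Fin 4 → ℂ) → ℂ) (j : Fin 4) (t : Fin 4 → ℂ) :
    Dc (fun k => g k ∘ L) j t = ∑ l, L (Pi.single j 1) l • Dc g l (L t) := by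
  -- the `ℂ`-action on `ℍ[ℂ]` only unifies with these `Module` lemmas once the module is named
  simp only [Dc, pd_comp_continuousLinearEquiv, Finset.sum_smul (M := ℍ[ℂ]),
    Finset.smul_sum (N := ℍ[ℂ]), smul_smul]
  exact Finset.sum_comm

def zmapₗ : (Fin 4 → ℂ) →ₗ[ℂ] (Fin 4 → ℂ) where
  toFun := zmap
  map_add' x y := by ext i; fin_cases i <;> simp [zmap] <;> ring
  map_smul' c x := by ext i; fin_cases i <;> simp [zmap] <;> ring

lemma zmap_surjective : Function.Surjective zmap := fun z => by
  refine ⟨![(z 0 + z 1) / 2, (z 1 - z 0) / (2 * I), (z 2 + z 3) / (-2 * I), (z 3 - z 2) / 2], ?_⟩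
  ext i
  fin_cases i <;> simp [zmap] <;> field_simp <;> ring

def zmapEquiv : (Fin 4 → ℂ) ≃L[ℂ] (Fin 4 → ℂ) :=
  (LinearEquiv.ofBijective zmapₗ
    ⟨LinearMap.injective_iff_surjective.mpr zmap_surjective, zmap_surjective⟩).toContinuousLinearEquiv

lemma coe_zmapEquiv : ⇑zmapEquiv = zmap := rfl

lemma Dc_comp_zmap (g : Fin 4 → (Fin 4 → ℂ) → ℂ) (t : Fin 4 → ℂ) :
    Dc (fun k => g k ∘ zmap) 0 t = Dc g 0 (zmap t) + Dc g 1 (zmap t) ∧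
    Dc (fun k => g k ∘ zmap) 1 t = -I • Dc g 0 (zmap t) + I • Dc g 1 (zmap t) ∧
    Dc (fun k => g k ∘ zmap) 2 t = -I • Dc g 2 (zmap t) - I • Dc g 3 (zmap t) ∧
    Dc (fun k => g k ∘ zmap) 3 t = -Dc g 2 (zmap t) + Dc g 3 (zmap t) := by
  have h := Dc_comp_continuousLinearEquiv zmapEquiv g
  rw [coe_zmapEquiv] at h
  simp only [h, Fin.sum_univ_four]
  refine ⟨?_, ?_, ?_, ?_⟩ <;> ext <;> simp [zmap] <;> ring

lemma cauchyFueter_eq_two_smul_cartan (A B C D : ℍ[ℂ]) :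
    (A + B) + qI * (-I • A + I • B) + qJ * (-I • C - I • D) + qK * (-C + D)
      = (2 : ℂ) • (ee 1 * A + ee 0 * B - ee 3 * C - ee 2 * D) := by
  -- unfolded early, the literals `qI, qJ, qK` block the `Quaternion` product lemmas
  ext <;> simp [ee] <;> simp [qI, qJ, qK] <;> ring

def cauchyFueterOp (F : Fin 4 → (Fin 4 → ℂ) → ℂ) (t : Fin 4 → ℂ) : ℍ[ℂ] :=
  Dc F 0 t + qI * Dc F 1 t + qJ * Dc F 2 t + qK * Dc F 3 t

def cartanOp (g : Fin 4 → (Fin 4 → ℂ) → ℂ) (z : Fin 4 → ℂ) : ℍ[ℂ] :=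
  ee 1 * Dc g 0 z + ee 0 * Dc g 1 z - ee 3 * Dc g 2 z - ee 2 * Dc g 3 z

lemma cauchyFueterOp_comp_zmap (g : Fin 4 → (Fin 4 → ℂ) → ℂ) (t : Fin 4 → ℂ) :
    cauchyFueterOp (fun k => g k ∘ zmap) t = (2 : ℂ) • cartanOp g (zmap t) := by
  obtain ⟨h0, h1, h2, h3⟩ := Dc_comp_zmap g t
  rw [cauchyFueterOp, h0, h1, h2, h3]
  exact cauchyFueter_eq_two_smul_cartan _ _ _ _

lemma Quaternion.smul_eq_zero_iff {R : Type*} [Field R] {c : R} (hc : c ≠ 0) (x : ℍ[R]) :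
    c • x = 0 ↔ x = 0 := by
  simp [Quaternion.ext_iff, hc]

theorem cauchyFueter_iff_cartan_equation_general
    (g : Fin 4 → (Fin 4 → ℂ) → ℂ)
    (F : Fin 4 → (Fin 4 → ℂ) → ℂ) (hF : ∀ k t, F k t = g k (zmap t)) :
    (∀ t : Fin 4 → ℂ,
        Dc F 0 t + qI * Dc F 1 t + qJ * Dc F 2 t + qK * Dc F 3 t
          = (2 : ℂ) • (ee 1 * Dc g 0 (zmap t) + ee 0 * Dc g 1 (zmap t)
              - ee 3 * Dc g 2 (zmap t) - ee 2 * Dc g 3 (zmap t))) ∧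
    ((∀ t : Fin 4 → ℂ,
        Dc F 0 t + qI * Dc F 1 t + qJ * Dc F 2 t + qK * Dc F 3 t = 0) ↔
      ∀ z : Fin 4 → ℂ,
        ee 1 * Dc g 0 z + ee 0 * Dc g 1 z - ee 3 * Dc g 2 z - ee 2 * Dc g 3 z = 0) := by
  obtain rfl : F = fun k => g k ∘ zmap := funext fun k => funext (hF k)
  refine ⟨cauchyFueterOp_comp_zmap g, ?_⟩
  change (∀ t, cauchyFueterOp _ t = 0) ↔ ∀ z, cartanOp g z = 0
  simp only [cauchyFueterOp_comp_zmap, Quaternion.smul_eq_zero_iff (two_ne_zero' ℂ)]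
  exact (zmap_surjective.forall (p := fun z => cartanOp g z = 0)).symm

/-- `f(t) = g(z(t))` satisfies the Cauchy–Fueter type equation
iff `g` satisfies `e₂ ∂g/∂z₁ + e₁ ∂g/∂z₂ - e₄ ∂g/∂z₃ - e₃ ∂g/∂z₄ = 0`;
indeed the corresponding operator identity (with factor 2) holds pointwise. -/
theorem cauchyFueter_iff_cartan_equation
    (g : Fin 4 → (Fin 4 → ℂ) → ℂ) (hg : ∀ k, Differentiable ℂ (g k))
    (F : Fin 4 → (Fin 4 → ℂ) → ℂ) (hF : ∀ k t, F k t = g k (zmap t)) :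
    (∀ t : Fin 4 → ℂ,
        Dc F 0 t + qI * Dc F 1 t + qJ * Dc F 2 t + qK * Dc F 3 t
          = (2 : ℂ) • (ee 1 * Dc g 0 (zmap t) + ee 0 * Dc g 1 (zmap t)
              - ee 3 * Dc g 2 (zmap t) - ee 2 * Dc g 3 (zmap t))) ∧
    ((∀ t : Fin 4 → ℂ,
        Dc F 0 t + qI * Dc F 1 t + qJ * Dc F 2 t + qK * Dc F 3 t = 0) ↔
      ∀ z : Fin 4 → ℂ,
        ee 1 * Dc g 0 z + ee 0 * Dc g 1 z - ee 3 * Dc g 2 z - ee 2 * Dc g 3 z = 0) :=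
  cauchyFueter_iff_cartan_equation_general g F hF
end
end

section
/- Let g, h : ℂ² → ℂ be holomorphic and define f : ℂ⁴ → ℍ(ℂ) by f(z_1,z_2,z_3,z_4) = g(z_2,z_3) e_1 + h(z_1,z_4) e_2 + ( z_3 ∂h/∂w_1(z_1,z_4) + z_2 ∂h/∂w_2(z_1,z_4) ) e_3 + ( z_4 ∂g/∂w_1(z_2,z_3) + z_1 ∂g/∂w_2(z_2,z_3) ) e_4. Then f satisfies the equation e_2 ∂f/∂z_1 + e_1 ∂f/∂z_2 − e_4 ∂f/∂z_3 − e_3 ∂f/∂z_4 = 0 on ℂ⁴. -/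
noncomputable section

open Quaternion

/-- Complex partial derivative in the first argument of `u : ℂ² → ℂ`. -/
def pda (u : ℂ × ℂ → ℂ) (p : ℂ × ℂ) : ℂ := fderiv ℂ u p (1, 0)

/-- Complex partial derivative in the second argument of `u : ℂ² → ℂ`. -/
def pdb (u : ℂ × ℂ → ℂ) (p : ℂ × ℂ) : ℂ := fderiv ℂ u p (0, 1)

/-! The multiplication table of the Cartan basis (`e_i e_j` is `0` or some `e_k`) turns the equation
into four identities between first partial derivatives of the components. Each pairs
`u(z_i, z_j)` (`u = g` or `h`) with its companion `z_k ∂₁u(z_i, z_j) + z_l ∂₂u(z_i, z_j)` in the two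
remaining variables, and holds because the `z_k`- and `z_l`-derivatives of the companion are
`∂₁u` and `∂₂u`.

This uses that `∂₁u` and `∂₂u` are holomorphic again. By the one-variable Cauchy formula on the
complex line through `p` in direction `v`, `Du(p) v = (2πi)⁻¹ ∮_{|ζ|=1} ζ⁻² u(p + ζ v) dζ`;
Cauchy estimates on such lines bound `Du` locally, so one may differentiate under the integral. -/

open Metric MeasureTheory Set
open scoped Real

section CauchyFormula

variable {E G : Type*} [NormedAddCommGroup E] [NormedSpace ℂ E]
  [NormedAddCommGroup G] [NormedSpace ℂ G] [CompleteSpace G] {F : E → G}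

theorem Differentiable.fderiv_apply_eq_cderiv (hF : Differentiable ℂ F) (p v : E) {r : ℝ}
    (hr : 0 < r) : fderiv ℂ F p v = Complex.cderiv r (fun ζ : ℂ => F (p + ζ • v)) 0 := by
  have hline : HasDerivAt (fun ζ : ℂ => p + ζ • v) v 0 := by
    simpa using ((hasDerivAt_id (0 : ℂ)).smul_const v).const_add p
  have hcomp : HasDerivAt (fun ζ : ℂ => F (p + ζ • v)) (fderiv ℂ F p v) 0 := by
    have := (hF (p + (0 : ℂ) • v)).hasFDerivAt.comp_hasDerivAt (0 : ℂ) hline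
    rwa [zero_smul, add_zero] at this
  have hdiff : Differentiable ℂ (fun ζ : ℂ => F (p + ζ • v)) := hF.comp (by fun_prop)
  rw [Complex.cderiv_eq_deriv isOpen_univ hdiff.differentiableOn hr (subset_univ _), hcomp.deriv]

theorem Differentiable.norm_fderiv_le_of_forall_mem_closedBall_norm_le (hF : Differentiable ℂ F)
    {p : E} {r M : ℝ} (hr : 0 < r) (hM : ∀ q ∈ closedBall p r, ‖F q‖ ≤ M) :
    ‖fderiv ℂ F p‖ ≤ M / r := by
  have hM₀ : 0 ≤ M := (norm_nonneg _).trans (hM p (mem_closedBall_self hr.le))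
  refine ContinuousLinearMap.opNorm_le_bound _ (by positivity) fun v => ?_
  rcases eq_or_ne v 0 with rfl | hv
  · simp
  have hv' : 0 < ‖v‖ := norm_pos_iff.2 hv
  have hR : 0 < r / ‖v‖ := div_pos hr hv'
  rw [hF.fderiv_apply_eq_cderiv p v hR]
  calc ‖Complex.cderiv (r / ‖v‖) (fun ζ : ℂ => F (p + ζ • v)) 0‖ ≤ M / (r / ‖v‖) := by
        refine Complex.norm_cderiv_le hR fun ζ hζ => hM _ ?_
        rw [mem_sphere_zero_iff_norm] at hζ
        rw [mem_closedBall, dist_eq_norm, add_sub_cancel_left, norm_smul, hζ,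
          div_mul_cancel₀ _ hv'.ne']
    _ = M / r * ‖v‖ := by field_simp

theorem Differentiable.exists_bound_fderiv_on_ball [ProperSpace E] (hF : Differentiable ℂ F)
    (p₀ : E) (R : ℝ) : ∃ C, ∀ q ∈ ball p₀ R, ‖fderiv ℂ F q‖ ≤ C := by
  obtain ⟨M, hM⟩ := (isCompact_closedBall p₀ (R + 1)).exists_bound_of_continuousOn
    hF.continuous.continuousOn
  refine ⟨M, fun q hq => div_one M ▸
    hF.norm_fderiv_le_of_forall_mem_closedBall_norm_le one_pos fun x hx => hM x ?_⟩
  rw [mem_closedBall] at hx ⊢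
  rw [mem_ball] at hq
  linarith [dist_triangle x q p₀]

theorem Differentiable.differentiable_fderiv_apply [FiniteDimensional ℂ E]
    [SecondCountableTopology G] (hF : Differentiable ℂ F) (v : E) :
    Differentiable ℂ fun p => fderiv ℂ F p v := by
  intro p₀
  borelize E
  obtain ⟨C, hC⟩ := hF.exists_bound_fderiv_on_ball p₀ (1 + ‖v‖)
  set k : ℝ → ℂ := fun θ => circleMap 0 1 θ * Complex.I * ((circleMap 0 1 θ - 0) ^ 2)⁻¹
  have hk : Continuous k :=
    (continuous_circleMap 0 1).mul continuous_const |>.mul <|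
      Continuous.inv₀ (by fun_prop) fun θ => by simp
  have hk_norm : ∀ θ, ‖k θ‖ = 1 := fun θ => by simp [k]
  set μ := volume.restrict (Icc 0 (2 * π))
  have hformula : (fun p => fderiv ℂ F p v) =
      fun p => (2 * π * Complex.I : ℂ)⁻¹ • ∫ θ, k θ • F (p + circleMap 0 1 θ • v) ∂μ := by
    ext p
    rw [hF.fderiv_apply_eq_cderiv p v one_pos, Complex.cderiv, circleIntegral_def_Icc]
    simp only [k, deriv_circleMap, smul_smul]
    rfl
  have hnear : ∀ p ∈ ball p₀ 1, ∀ θ, p + circleMap 0 1 θ • v ∈ ball p₀ (1 + ‖v‖) := by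
    intro p hp θ
    rw [mem_ball_iff_norm] at hp ⊢
    calc ‖p + circleMap 0 1 θ • v - p₀‖ ≤ ‖p - p₀‖ + ‖circleMap 0 1 θ • v‖ := by
          rw [add_sub_right_comm]; exact norm_add_le _ _
      _ < 1 + ‖v‖ := by simpa [norm_smul] using hp
  have hcont : ∀ p, Continuous fun θ => k θ • F (p + circleMap 0 1 θ • v) :=
    fun p => hk.smul (hF.continuous.comp (by fun_prop))
  have hint := hasFDerivAt_integral_of_dominated_of_fderiv_le (μ := μ)
    (F := fun p θ => k θ • F (p + circleMap 0 1 θ • v))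
    (F' := fun p θ => k θ • fderiv ℂ F (p + circleMap 0 1 θ • v)) (x₀ := p₀)
    (bound := fun _ => C) (ball_mem_nhds p₀ one_pos)
    (Filter.Eventually.of_forall fun p => (hcont p).aestronglyMeasurable)
    (hcont p₀).integrableOn_Icc
    (hk.aestronglyMeasurable.smul <| ((measurable_fderiv ℂ F).comp
      (by fun_prop : Continuous fun θ : ℝ => p₀ + circleMap 0 1 θ • v).measurable)
        |>.aestronglyMeasurable)
    (Filter.Eventually.of_forall fun θ p hp => by
      rw [norm_smul, hk_norm, one_mul]
      exact hC _ (hnear p hp θ))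
    (integrable_const C)
    (Filter.Eventually.of_forall fun θ p _ =>
      ((hF _).hasFDerivAt.comp p ((hasFDerivAt_id p).add_const _)).const_smul (k θ))
  rw [hformula]
  exact hint.differentiableAt.const_smul _

end CauchyFormula

theorem Differentiable.differentiable_pda {u : ℂ × ℂ → ℂ} (hu : Differentiable ℂ u) :
    Differentiable ℂ (pda u) :=
  hu.differentiable_fderiv_apply (1, 0)

theorem Differentiable.differentiable_pdb {u : ℂ × ℂ → ℂ} (hu : Differentiable ℂ u) :
    Differentiable ℂ (pdb u) :=
  hu.differentiable_fderiv_apply (0, 1)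

section PartialDerivatives

variable {a b : (Fin 4 → ℂ) → ℂ} {z : Fin 4 → ℂ}

theorem pd_add (ha : DifferentiableAt ℂ a z) (hb : DifferentiableAt ℂ b z) (k : Fin 4) :
    pd k (fun y => a y + b y) z = pd k a z + pd k b z := by
  simp only [pd, fderiv_fun_add ha hb, add_apply]

theorem pd_mul (ha : DifferentiableAt ℂ a z) (hb : DifferentiableAt ℂ b z) (k : Fin 4) :
    pd k (fun y => a y * b y) z = pd k a z * b z + a z * pd k b z := by
  simp only [pd, fderiv_fun_mul ha hb, add_apply, smul_apply, smul_eq_mul]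
  ring

theorem pd_coord (k l : Fin 4) : pd k (fun y => y l) z = (Pi.single k 1 : Fin 4 → ℂ) l := by
  simp [pd, fderiv_apply]

variable {u : ℂ × ℂ → ℂ} {i j : Fin 4}

theorem pd_comp_pair (hu : DifferentiableAt ℂ u (z i, z j)) (k : Fin 4) :
    pd k (fun y => u (y i, y j)) z =
      fderiv ℂ u (z i, z j) ((Pi.single k 1 : Fin 4 → ℂ) i, (Pi.single k 1 : Fin 4 → ℂ) j) := by
  have hpair := (hasFDerivAt_apply (𝕜 := ℂ) i z).prodMk (hasFDerivAt_apply (𝕜 := ℂ) j z)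
  rw [pd, HasFDerivAt.fderiv (f := fun y => u (y i, y j)) (hu.hasFDerivAt.comp z hpair)]
  rfl

theorem pd_comp_pair_fst (hu : DifferentiableAt ℂ u (z i, z j)) (hij : i ≠ j) :
    pd i (fun y => u (y i, y j)) z = pda u (z i, z j) := by
  rw [pd_comp_pair hu, Pi.single_eq_same, Pi.single_eq_of_ne hij.symm]
  rfl

theorem pd_comp_pair_snd (hu : DifferentiableAt ℂ u (z i, z j)) (hij : i ≠ j) :
    pd j (fun y => u (y i, y j)) z = pdb u (z i, z j) := by
  rw [pd_comp_pair hu, Pi.single_eq_same, Pi.single_eq_of_ne hij]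
  rfl

theorem pd_comp_pair_of_ne (hu : DifferentiableAt ℂ u (z i, z j)) {k : Fin 4} (hki : k ≠ i)
    (hkj : k ≠ j) : pd k (fun y => u (y i, y j)) z = 0 := by
  rw [pd_comp_pair hu, Pi.single_eq_of_ne hki.symm, Pi.single_eq_of_ne hkj.symm, Prod.mk_zero_zero,
    map_zero]

theorem pd_linear_comp_pair {A B : ℂ × ℂ → ℂ} (hA : DifferentiableAt ℂ A (z i, z j))
    (hB : DifferentiableAt ℂ B (z i, z j)) (k l : Fin 4) {m : Fin 4} (hmi : m ≠ i) (hmj : m ≠ j) :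
    pd m (fun y => y k * A (y i, y j) + y l * B (y i, y j)) z =
      (Pi.single m 1 : Fin 4 → ℂ) k * A (z i, z j) +
        (Pi.single m 1 : Fin 4 → ℂ) l * B (z i, z j) := by
  have hA' : DifferentiableAt ℂ (fun y => A (y i, y j)) z := hA.comp z (by fun_prop)
  have hB' : DifferentiableAt ℂ (fun y => B (y i, y j)) z := hB.comp z (by fun_prop)
  have hk : DifferentiableAt ℂ (fun y : Fin 4 → ℂ => y k) z := by fun_prop
  have hl : DifferentiableAt ℂ (fun y : Fin 4 → ℂ => y l) z := by fun_prop
  have hkA : DifferentiableAt ℂ (fun y => y k * A (y i, y j)) z := hk.mul hA'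
  have hlB : DifferentiableAt ℂ (fun y => y l * B (y i, y j)) z := hl.mul hB'
  rw [pd_add hkA hlB, pd_mul hk hA', pd_mul hl hB', pd_coord, pd_coord,
    pd_comp_pair_of_ne hA hmi hmj, pd_comp_pair_of_ne hB hmi hmj]
  ring

theorem pd_comp_pair_eq_pd_companion (hu : Differentiable ℂ u) {k l : Fin 4}
    (hij : i ≠ j := by decide) (hki : k ≠ i := by decide) (hkj : k ≠ j := by decide)
    (hli : l ≠ i := by decide) (hlj : l ≠ j := by decide) (hkl : k ≠ l := by decide) :
    pd i (fun y => u (y i, y j)) z =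
        pd k (fun y => y k * pda u (y i, y j) + y l * pdb u (y i, y j)) z ∧
      pd j (fun y => u (y i, y j)) z =
        pd l (fun y => y k * pda u (y i, y j) + y l * pdb u (y i, y j)) z := by
  have hA := hu.differentiable_pda (z i, z j)
  have hB := hu.differentiable_pdb (z i, z j)
  rw [pd_comp_pair_fst (hu _) hij, pd_comp_pair_snd (hu _) hij,
    pd_linear_comp_pair hA hB k l hki hkj, pd_linear_comp_pair hA hB k l hli hlj,
    Pi.single_eq_same, Pi.single_eq_same, Pi.single_eq_of_ne hkl.symm, Pi.single_eq_of_ne hkl]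
  constructor <;> ring

end PartialDerivatives

theorem ee_mul_ee (i j : Fin 4) :
    ee i * ee j = ![![ee 0, 0, ee 2, 0], ![0, ee 1, 0, ee 3],
      ![0, ee 2, 0, ee 0], ![ee 3, 0, ee 1, 0]] i j := by
  fin_cases i <;> fin_cases j <;> ext <;>
    simp [ee, Quaternion.re_mul, Quaternion.imI_mul, Quaternion.imJ_mul, Quaternion.imK_mul,
      Quaternion.re_smul, Quaternion.imI_smul, Quaternion.imJ_smul, Quaternion.imK_smul,
      show qI.re = 0 from rfl, show qI.imI = 1 from rfl, show qI.imJ = 0 from rfl,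
      show qI.imK = 0 from rfl, show qJ.re = 0 from rfl, show qJ.imI = 0 from rfl,
      show qJ.imJ = 1 from rfl, show qJ.imK = 0 from rfl, show qK.re = 0 from rfl,
      show qK.imI = 0 from rfl, show qK.imJ = 0 from rfl, show qK.imK = 1 from rfl] <;>
    ring_nf <;> simp <;> ring_nf

-- Instance search does not find `SMulCommClass ℂ ℍ[ℂ] ℍ[ℂ]`, so `mul_smul_comm` cannot fire here.
theorem ee_mul_smul_ee (c : ℂ) (i j : Fin 4) : ee i * (c • ee j) = c • (ee i * ee j) :=
  Algebra.mul_smul_comm c _ _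

theorem cartan_eq_zero_of_pd_eq (f : Fin 4 → (Fin 4 → ℂ) → ℂ) (z : Fin 4 → ℂ)
    (h₀ : pd 1 (f 0) z = pd 3 (f 3) z) (h₁ : pd 2 (f 0) z = pd 0 (f 3) z)
    (h₂ : pd 0 (f 1) z = pd 2 (f 2) z) (h₃ : pd 3 (f 1) z = pd 1 (f 2) z) :
    ee 1 * Dc f 0 z + ee 0 * Dc f 1 z - ee 3 * Dc f 2 z - ee 2 * Dc f 3 z = 0 := by
  simp only [Dc, Fin.sum_univ_four, mul_add, ee_mul_smul_ee, ee_mul_ee, h₀, h₁, h₂, h₃]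
  simp only [Fin.isValue, Matrix.cons_val', Matrix.cons_val_zero, Matrix.cons_val_fin_one,
    Matrix.cons_val_one, Matrix.cons_val, smul_zero, zero_add, add_zero]
  abel

/-- the function
`f = g(z₂,z₃) e₁ + h(z₁,z₄) e₂ + (z₃ ∂h/∂w₁ + z₂ ∂h/∂w₂) e₃ + (z₄ ∂g/∂w₁ + z₁ ∂g/∂w₂) e₄`
satisfies `e₂ ∂f/∂z₁ + e₁ ∂f/∂z₂ - e₄ ∂f/∂z₃ - e₃ ∂f/∂z₄ = 0` on ℂ⁴ (indexed from 0). -/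
theorem solution_of_cartan_equation
    (g h : ℂ × ℂ → ℂ) (hg : Differentiable ℂ g) (hh : Differentiable ℂ h)
    (f : Fin 4 → (Fin 4 → ℂ) → ℂ)
    (hf0 : ∀ z : Fin 4 → ℂ, f 0 z = g (z 1, z 2))
    (hf1 : ∀ z : Fin 4 → ℂ, f 1 z = h (z 0, z 3))
    (hf2 : ∀ z : Fin 4 → ℂ, f 2 z = z 2 * pda h (z 0, z 3) + z 1 * pdb h (z 0, z 3))
    (hf3 : ∀ z : Fin 4 → ℂ, f 3 z = z 3 * pda g (z 1, z 2) + z 0 * pdb g (z 1, z 2)) :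
    ∀ z : Fin 4 → ℂ,
      ee 1 * Dc f 0 z + ee 0 * Dc f 1 z - ee 3 * Dc f 2 z - ee 2 * Dc f 3 z = 0 := by
  intro z
  obtain ⟨hg₁, hg₂⟩ := pd_comp_pair_eq_pd_companion (z := z) (i := 1) (j := 2) (k := 3) (l := 0) hg
  obtain ⟨hh₁, hh₂⟩ := pd_comp_pair_eq_pd_companion (z := z) (i := 0) (j := 3) (k := 2) (l := 1) hh
  rw [← funext hf0, ← funext hf3] at hg₁ hg₂
  rw [← funext hf1, ← funext hf2] at hh₁ hh₂
  exact cartan_eq_zero_of_pd_eq f z hg₁ hg₂ hh₁ hh₂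
end
end

section
/- Let g, h : ℂ² → ℂ be holomorphic. Define F : ℂ⁴ → ℍ(ℂ) by F(t_0,t_1,t_2,t_3) := g(z_2,z_3) e_1 + h(z_1,z_4) e_2 + ( z_3 ∂h/∂w_1(z_1,z_4) + z_2 ∂h/∂w_2(z_1,z_4) ) e_3 + ( z_4 ∂g/∂w_1(z_2,z_3) + z_1 ∂g/∂w_2(z_2,z_3) ) e_4, where z_1 = t_0 − i t_1, z_2 = t_0 + i t_1, z_3 = −i t_2 − t_3, z_4 = −i t_2 + t_3. Then F satisfies the Cauchy–Fueter type equation ∂F/∂t_0 + I ∂F/∂t_1 + J ∂F/∂t_2 + K ∂F/∂t_3 = 0 on ℂ⁴. -/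
noncomputable section

open Quaternion

/-! Write `z = zmap t`. By the chain rule, `∂₀ + I∂₁ + J∂₂ + K∂₃` acts on a function of `z` as
`∑ₘ zSymbol m ∂/∂zₘ`, where `zSymbol m = ∑ⱼ (∂zₘ/∂tⱼ) qⱼ` and `q = (1, I, J, K)`. Under
`ℍ(ℂ) ≅ M₂(ℂ)` the quaternions `zSymbol m / 2` are the four matrix units and each `e_k` is `±`
one of them, so all products `zSymbol m * e_k` are known: the second derivatives of `g` and `h`
occurring in `F₂`, `F₃` are multiplied by vanishing products, and the first derivatives cancel
in pairs.

The analytic input is that the partial derivatives of a holomorphic function of two variables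
are holomorphic. Cauchy's formula in the first variable expresses `∂u/∂w₁` as a circle integral
depending on both variables; continuity of such integrals makes `u` of class `C¹`, and then
differentiation under the integral sign applies. -/

open Complex Metric Set Filter Topology Real MeasureTheory

section ParametricCircleIntegral

variable {H E : Type*} [NormedAddCommGroup E] [NormedSpace ℂ E] {U : Set (H × ℂ)} {p₀ : H}
  {c : ℂ} {R : ℝ}

lemma exists_closedBall_prod_sphere_subset [PseudoMetricSpace H] (hU : IsOpen U)
    (hp₀ : ∀ ζ ∈ sphere c |R|, (p₀, ζ) ∈ U) :
    ∃ δ > 0, closedBall p₀ δ ×ˢ sphere c |R| ⊆ U := by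
  obtain ⟨V, W, hV, -, hp₀V, hW, hVW⟩ := generalized_tube_lemma (s := {p₀}) isCompact_singleton
    (isCompact_sphere c |R|) hU (by rintro ⟨p, ζ⟩ ⟨rfl, hζ⟩; exact hp₀ ζ hζ)
  obtain ⟨δ, hδ, hδV⟩ := nhds_basis_closedBall.mem_iff.mp (hV.mem_nhds (hp₀V rfl))
  exact ⟨δ, hδ, (prod_mono hδV hW).trans hVW⟩

lemma continuous_deriv_circleMap : Continuous (deriv (circleMap c R)) :=
  (contDiff_circleMap c R (n := 1)).continuous_deriv le_rfl

lemma continuousAt_circleIntegral_of_continuousOn [PseudoMetricSpace H] {Φ : H × ℂ → E}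
    (hU : IsOpen U) (hΦ : ContinuousOn Φ U) (hp₀ : ∀ ζ ∈ sphere c |R|, (p₀, ζ) ∈ U) :
    ContinuousAt (fun p => ∮ ζ in C(c, R), Φ (p, ζ)) p₀ := by
  obtain ⟨δ, hδ, hδU⟩ := exists_closedBall_prod_sphere_subset hU hp₀
  have hcont : Continuous (Function.uncurry fun (p : ball p₀ δ) θ =>
      deriv (circleMap c R) θ • Φ ((p : H), circleMap c R θ)) :=
    (continuous_deriv_circleMap.comp continuous_snd).smul <| hΦ.comp_continuous (by fun_prop)
      fun q => hδU ⟨ball_subset_closedBall q.1.2, circleMap_mem_sphere' c R q.2⟩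
  have hint := intervalIntegral.continuous_parametric_intervalIntegral_of_continuous'
    (μ := volume) hcont 0 (2 * π)
  exact (continuousOn_iff_continuous_domRestrict.mpr hint).continuousAt (ball_mem_nhds p₀ hδ)

lemma differentiableAt_circleIntegral_of_contDiffOn [NormedAddCommGroup H] [NormedSpace ℂ H]
    [ProperSpace H] [CompleteSpace E]
    {Φ : H × ℂ → E} (hU : IsOpen U) (hΦ : ContDiffOn ℂ 1 Φ U)
    (hp₀ : ∀ ζ ∈ sphere c |R|, (p₀, ζ) ∈ U) :
    DifferentiableAt ℂ (fun p => ∮ ζ in C(c, R), Φ (p, ζ)) p₀ := by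
  obtain ⟨δ, hδ, hδU⟩ := exists_closedBall_prod_sphere_subset hU hp₀
  have hmem : ∀ p ∈ closedBall p₀ δ, ∀ θ, (p, circleMap c R θ) ∈ U := fun p hp θ =>
    hδU ⟨hp, circleMap_mem_sphere' c R θ⟩
  have hΦ' : ContinuousOn (fderiv ℂ Φ) U := hΦ.continuousOn_fderiv_of_isOpen hU le_rfl
  obtain ⟨C, hC⟩ := ((isCompact_closedBall p₀ δ).prod
    (isCompact_sphere c |R|)).exists_bound_of_continuousOn (hΦ'.mono hδU)
  set F : H → ℝ → E := fun p θ => deriv (circleMap c R) θ • Φ (p, circleMap c R θ)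
  set F' : H → ℝ → H →L[ℂ] E := fun p θ =>
    deriv (circleMap c R) θ • (fderiv ℂ Φ (p, circleMap c R θ)).comp (.inl ℂ H ℂ)
  have hF : ∀ p ∈ closedBall p₀ δ, Continuous (F p) := fun p hp =>
    continuous_deriv_circleMap.smul <| hΦ.continuousOn.comp_continuous (by fun_prop) (hmem p hp)
  have hF' : Continuous (F' p₀) := continuous_deriv_circleMap.smul <|
    (hΦ'.comp_continuous (by fun_prop) (hmem p₀ (mem_closedBall_self hδ.le))).clm_comp
      continuous_const
  have hderiv : ∀ θ, ∀ p ∈ ball p₀ δ, HasFDerivAt (F · θ) (F' p θ) p := by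
    intro θ p hp
    have hq := hmem p (ball_subset_closedBall hp) θ
    exact (((hΦ.differentiableOn one_ne_zero _ hq).differentiableAt
      (hU.mem_nhds hq)).hasFDerivAt.comp p (hasFDerivAt_prodMk_left p _)).const_smul _
  have hbound : ∀ θ, ∀ p ∈ ball p₀ δ, ‖F' p θ‖ ≤ |R| * C := by
    intro θ p hp
    have hq : (p, circleMap c R θ) ∈ closedBall p₀ δ ×ˢ sphere c |R| :=
      ⟨ball_subset_closedBall hp, circleMap_mem_sphere' c R θ⟩
    calc ‖F' p θ‖
        ≤ |R| * (‖fderiv ℂ Φ (p, circleMap c R θ)‖ * ‖ContinuousLinearMap.inl ℂ H ℂ‖) := by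
          rw [norm_smul, deriv_circleMap, norm_mul, norm_circleMap_zero, norm_I, mul_one]
          gcongr
          exact ContinuousLinearMap.opNorm_comp_le _ _
      _ ≤ |R| * (C * 1) := by
          gcongr
          · exact (norm_nonneg _).trans (hC _ hq)
          · exact hC _ hq
          · exact ContinuousLinearMap.norm_inl_le_one ℂ H ℂ
      _ = |R| * C := by rw [mul_one]
  exact (intervalIntegral.hasFDerivAt_integral_of_dominated_of_fderiv_le (ball_mem_nhds p₀ hδ)
    (eventually_of_mem (ball_mem_nhds p₀ hδ) fun p hp =>
      (hF p (ball_subset_closedBall hp)).aestronglyMeasurable)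
    ((hF p₀ (mem_closedBall_self hδ.le)).intervalIntegrable _ _) hF'.aestronglyMeasurable
    (ae_of_all _ fun θ _ => hbound θ) intervalIntegrable_const
    (ae_of_all _ fun θ _ => hderiv θ)).differentiableAt

end ParametricCircleIntegral

section HolomorphicTwoVariables

variable {u : ℂ × ℂ → ℂ}

lemma hasDerivAt_pda {z w : ℂ} (hu : DifferentiableAt ℂ u (z, w)) :
    HasDerivAt (fun x => u (x, w)) (pda u (z, w)) z :=
  hu.hasFDerivAt.comp_hasDerivAt z ((hasDerivAt_id z).prodMk (hasDerivAt_const z w))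

lemma pdb_eq_pda_comp_prodComm (u : ℂ × ℂ → ℂ) :
    pdb u =
      pda (u ∘ ContinuousLinearEquiv.prodComm ℂ ℂ ℂ) ∘ ContinuousLinearEquiv.prodComm ℂ ℂ ℂ := by
  ext p
  simp only [pda, pdb, Function.comp_apply, ContinuousLinearEquiv.comp_right_fderiv]
  rfl

lemma fderiv_apply_eq_pda_add_pdb (u : ℂ × ℂ → ℂ) (p y : ℂ × ℂ) :
    fderiv ℂ u p y = y.1 * pda u p + y.2 * pdb u p := by
  conv_lhs => rw [show y = y.1 • ((1 : ℂ), (0 : ℂ)) + y.2 • ((0 : ℂ), (1 : ℂ)) by ext <;> simp]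
  rw [map_add, map_smul, map_smul, smul_eq_mul, smul_eq_mul, pda, pdb]

lemma pda_eq_circleIntegral (hu : Differentiable ℂ u) {c z : ℂ} {R : ℝ} (hz : z ∈ ball c R)
    (w : ℂ) : pda u (z, w) = (2 * π * I)⁻¹ • ∮ ζ in C(c, R), ((ζ - z) ^ 2)⁻¹ • u (ζ, w) := by
  rw [two_pi_I_inv_smul_circleIntegral_sub_sq_inv_smul_of_differentiable isOpen_univ
    (subset_univ _) (fun x _ => (hasDerivAt_pda (hu (x, w))).differentiableAt.differentiableWithinAt)
    hz, (hasDerivAt_pda (hu (z, w))).deriv]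

lemma pda_eventuallyEq_circleIntegral (hu : Differentiable ℂ u) (a b : ℂ) :
    pda u =ᶠ[𝓝 (a, b)] fun p => (2 * π * I)⁻¹ • ∮ ζ in C(a, 1), ((ζ - p.1) ^ 2)⁻¹ • u (ζ, p.2) := by
  filter_upwards [prod_mem_nhds (ball_mem_nhds a one_pos) univ_mem] with p hp
  exact pda_eq_circleIntegral hu hp.1 p.2

lemma continuousOn_cauchyIntegrand (hu : Continuous u) :
    ContinuousOn (fun q : (ℂ × ℂ) × ℂ => ((q.2 - q.1.1) ^ 2)⁻¹ • u (q.2, q.1.2))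
      {q | q.2 ≠ q.1.1} :=
  ((by fun_prop : Continuous fun q : (ℂ × ℂ) × ℂ => (q.2 - q.1.1) ^ 2).continuousOn.inv₀
    fun _ hq => pow_ne_zero 2 (sub_ne_zero.2 hq)).smul (hu.comp (by fun_prop)).continuousOn

lemma contDiffOn_cauchyIntegrand (hu : ContDiff ℂ 1 u) :
    ContDiffOn ℂ 1 (fun q : (ℂ × ℂ) × ℂ => ((q.2 - q.1.1) ^ 2)⁻¹ • u (q.2, q.1.2))
      {q | q.2 ≠ q.1.1} :=
  ((by fun_prop : ContDiff ℂ 1 fun q : (ℂ × ℂ) × ℂ => (q.2 - q.1.1) ^ 2).contDiffOn.inv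
    fun _ hq => pow_ne_zero 2 (sub_ne_zero.2 hq)).smul (hu.comp (by fun_prop)).contDiffOn

lemma Differentiable.continuous_pda (hu : Differentiable ℂ u) : Continuous (pda u) :=
  continuous_iff_continuousAt.2 fun ⟨a, b⟩ =>
    ((continuousAt_circleIntegral_of_continuousOn (isOpen_ne_fun (by fun_prop) (by fun_prop))
      (continuousOn_cauchyIntegrand hu.continuous) fun _ hζ =>
        ne_of_mem_sphere hζ (by norm_num)).const_smul (2 * π * I)⁻¹).congr
      (pda_eventuallyEq_circleIntegral hu a b).symm

lemma Differentiable.continuous_pdb (hu : Differentiable ℂ u) : Continuous (pdb u) := by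
  rw [pdb_eq_pda_comp_prodComm]
  exact (hu.comp (ContinuousLinearEquiv.prodComm ℂ ℂ ℂ).differentiable).continuous_pda.comp
    (ContinuousLinearEquiv.prodComm ℂ ℂ ℂ).continuous

lemma Differentiable.contDiff_one (hu : Differentiable ℂ u) : ContDiff ℂ 1 u := by
  refine contDiff_one_iff_fderiv.2 ⟨hu, continuous_clm_apply.2 fun y => ?_⟩
  simp only [fderiv_apply_eq_pda_add_pdb]
  have := hu.continuous_pda
  have := hu.continuous_pdb
  fun_prop

lemma Differentiable.pda (hu : Differentiable ℂ u) : Differentiable ℂ (pda u) := fun ⟨a, b⟩ =>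
  (pda_eventuallyEq_circleIntegral hu a b).differentiableAt_iff.2 <|
    (differentiableAt_circleIntegral_of_contDiffOn (isOpen_ne_fun (by fun_prop) (by fun_prop))
      (contDiffOn_cauchyIntegrand hu.contDiff_one) fun _ hζ =>
        ne_of_mem_sphere hζ (by norm_num)).fun_const_smul _

lemma Differentiable.pdb (hu : Differentiable ℂ u) : Differentiable ℂ (pdb u) := by
  rw [pdb_eq_pda_comp_prodComm]
  exact (hu.comp (ContinuousLinearEquiv.prodComm ℂ ℂ ℂ).differentiable).pda.comp
    (ContinuousLinearEquiv.prodComm ℂ ℂ ℂ).differentiable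

end HolomorphicTwoVariables

section CauchyFueter

variable {t : Fin 4 → ℂ} {u v : (Fin 4 → ℂ) → ℂ}

def qUnit : Fin 4 → ℍ[ℂ] := ![1, qI, qJ, qK]

def cauchyFueter (u : (Fin 4 → ℂ) → ℂ) (t : Fin 4 → ℂ) : ℍ[ℂ] := ∑ j, pd j u t • qUnit j

-- The `ℂ`-action on `ℍ[ℂ]` used by `ee` and `Dc` is `Quaternion.instSMul`, which is not
-- syntactically the action of `Algebra ℂ ℍ[ℂ]`, so the general lemmas do not fire in `simp`.
lemma complex_smul_mul_assoc (c : ℂ) (x y : ℍ[ℂ]) : (c • x) * y = c • (x * y) :=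
  Algebra.smul_mul_assoc c x y

lemma mul_complex_smul_comm (c : ℂ) (x y : ℍ[ℂ]) : x * (c • y) = c • (x * y) :=
  Algebra.mul_smul_comm c x y

lemma Dc_combination_eq_sum_cauchyFueter_mul_ee (F : Fin 4 → (Fin 4 → ℂ) → ℂ) (t : Fin 4 → ℂ) :
    Dc F 0 t + qI * Dc F 1 t + qJ * Dc F 2 t + qK * Dc F 3 t =
      ∑ k, cauchyFueter (F k) t * ee k := by
  simp only [Dc, cauchyFueter, qUnit, Fin.sum_univ_four, mul_add, add_mul, mul_complex_smul_comm,
    complex_smul_mul_assoc, Matrix.cons_val_zero, Matrix.cons_val_one, Matrix.cons_val_two,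
    Matrix.cons_val_three, Matrix.head_cons, Matrix.tail_cons, one_mul]
  abel

lemma pd_add_s6 (j : Fin 4) (hu : DifferentiableAt ℂ u t) (hv : DifferentiableAt ℂ v t) :
    pd j (fun s => u s + v s) t = pd j u t + pd j v t := by
  rw [pd, fderiv_fun_add hu hv]
  rfl

lemma pd_mul_s6 (j : Fin 4) (hu : DifferentiableAt ℂ u t) (hv : DifferentiableAt ℂ v t) :
    pd j (fun s => u s * v s) t = u t * pd j v t + v t * pd j u t := by
  rw [pd, fderiv_fun_mul hu hv]
  simp [pd]

lemma pd_comp_clm {E : Type*} [NormedAddCommGroup E] [NormedSpace ℂ E] (j : Fin 4) {w : E → ℂ}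
    {φ : (Fin 4 → ℂ) →L[ℂ] E} (hw : DifferentiableAt ℂ w (φ t)) :
    pd j (fun s => w (φ s)) t = fderiv ℂ w (φ t) (φ (Pi.single j 1)) := by
  rw [pd, show (fun s => w (φ s)) = w ∘ φ from rfl, fderiv_comp t hw φ.differentiableAt, φ.fderiv]
  rfl

lemma cauchyFueter_add (hu : DifferentiableAt ℂ u t) (hv : DifferentiableAt ℂ v t) :
    cauchyFueter (fun s => u s + v s) t = cauchyFueter u t + cauchyFueter v t := by
  simp only [cauchyFueter, pd_add_s6 _ hu hv, Fin.sum_univ_four]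
  module

lemma cauchyFueter_mul (hu : DifferentiableAt ℂ u t) (hv : DifferentiableAt ℂ v t) :
    cauchyFueter (fun s => u s * v s) t = u t • cauchyFueter v t + v t • cauchyFueter u t := by
  simp only [cauchyFueter, pd_mul_s6 _ hu hv, Fin.sum_univ_four]
  module

end CauchyFueter

section ChangeOfVariables

variable {t : Fin 4 → ℂ}

def zSymbol (m : Fin 4) : ℍ[ℂ] := ∑ j, zmap (Pi.single j 1) m • qUnit j

def zCoord (m : Fin 4) : (Fin 4 → ℂ) →L[ℂ] ℂ :=
  LinearMap.toContinuousLinearMap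
    { toFun := fun t => zmap t m
      map_add' := fun s t => by fin_cases m <;> simp [zmap] <;> ring
      map_smul' := fun c t => by fin_cases m <;> simp [zmap] <;> ring }

lemma zCoord_apply (m : Fin 4) (t : Fin 4 → ℂ) : zCoord m t = zmap t m := rfl

lemma cauchyFueter_zmap (m : Fin 4) : cauchyFueter (fun s => zmap s m) t = zSymbol m := by
  simp only [cauchyFueter, zSymbol, pd, ← zCoord_apply, (zCoord m).fderiv]

lemma cauchyFueter_comp_zmap {v : ℂ × ℂ → ℂ} {m n : Fin 4}
    (hv : DifferentiableAt ℂ v (zmap t m, zmap t n)) :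
    cauchyFueter (fun s => v (zmap s m, zmap s n)) t =
      pda v (zmap t m, zmap t n) • zSymbol m + pdb v (zmap t m, zmap t n) • zSymbol n := by
  have hpd (j : Fin 4) : pd j (fun s => v (zmap s m, zmap s n)) t =
      zmap (Pi.single j 1) m * pda v (zmap t m, zmap t n) +
        zmap (Pi.single j 1) n * pdb v (zmap t m, zmap t n) :=
    (pd_comp_clm (φ := (zCoord m).prod (zCoord n)) j hv).trans (fderiv_apply_eq_pda_add_pdb _ _ _)
  simp only [cauchyFueter, zSymbol, hpd, Fin.sum_univ_four]
  module

lemma cauchyFueter_zmap_mul_pda_add_zmap_mul_pdb {v : ℂ × ℂ → ℂ} (hv : Differentiable ℂ v)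
    (a b m n : Fin 4) :
    cauchyFueter (fun s => zmap s a * pda v (zmap s m, zmap s n) +
        zmap s b * pdb v (zmap s m, zmap s n)) t =
      zmap t a • (pda (pda v) (zmap t m, zmap t n) • zSymbol m +
          pdb (pda v) (zmap t m, zmap t n) • zSymbol n) +
        pda v (zmap t m, zmap t n) • zSymbol a +
      (zmap t b • (pda (pdb v) (zmap t m, zmap t n) • zSymbol m +
          pdb (pdb v) (zmap t m, zmap t n) • zSymbol n) +
        pdb v (zmap t m, zmap t n) • zSymbol b) := by
  have hz (k : Fin 4) : DifferentiableAt ℂ (fun s => zmap s k) t := (zCoord k).differentiableAt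
  have hcomp {w : ℂ × ℂ → ℂ} (hw : Differentiable ℂ w) :
      DifferentiableAt ℂ (fun s => w (zmap s m, zmap s n)) t :=
    (hw _).comp t ((zCoord m).prod (zCoord n)).differentiableAt
  rw [cauchyFueter_add ((hz a).fun_mul (hcomp hv.pda)) ((hz b).fun_mul (hcomp hv.pdb)),
    cauchyFueter_mul (hz a) (hcomp hv.pda), cauchyFueter_mul (hz b) (hcomp hv.pdb),
    cauchyFueter_comp_zmap (hv.pda _), cauchyFueter_comp_zmap (hv.pdb _),
    cauchyFueter_zmap, cauchyFueter_zmap]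

lemma zSymbol_eq : zSymbol = ![1 - I • qI, 1 + I • qI, -(I • qJ) - qK, -(I • qJ) + qK] := by
  ext m : 1
  fin_cases m <;> simp [zSymbol, qUnit, zmap, Fin.sum_univ_four] <;> module

lemma zSymbol_mul_ee_eq_zero :
    zSymbol 0 * ee 2 = 0 ∧ zSymbol 3 * ee 2 = 0 ∧ zSymbol 1 * ee 3 = 0 ∧ zSymbol 2 * ee 3 = 0 := by
  refine ⟨?_, ?_, ?_, ?_⟩ <;> ext <;> simp [zSymbol_eq, ee] <;> simp [qI, qJ, qK] <;> ring_nf <;>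
    simp [I_sq]

lemma zSymbol_mul_ee_add_eq_zero :
    zSymbol 1 * ee 0 + zSymbol 3 * ee 3 = 0 ∧ zSymbol 2 * ee 0 + zSymbol 0 * ee 3 = 0 ∧
      zSymbol 0 * ee 1 + zSymbol 2 * ee 2 = 0 ∧ zSymbol 3 * ee 1 + zSymbol 1 * ee 2 = 0 := by
  refine ⟨?_, ?_, ?_, ?_⟩ <;> ext <;> simp [zSymbol_eq, ee] <;> simp [qI, qJ, qK]; ring_nf

end ChangeOfVariables

/-- the function
`F(t) = g(z₂,z₃) e₁ + h(z₁,z₄) e₂ + (z₃ ∂h/∂w₁ + z₂ ∂h/∂w₂) e₃ + (z₄ ∂g/∂w₁ + z₁ ∂g/∂w₂) e₄`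
with `z = zmap t` satisfies the Cauchy–Fueter type equation
`∂F/∂t₀ + I ∂F/∂t₁ + J ∂F/∂t₂ + K ∂F/∂t₃ = 0` on ℂ⁴. -/
theorem solution_of_cauchyFueter_equation
    (g h : ℂ × ℂ → ℂ) (hg : Differentiable ℂ g) (hh : Differentiable ℂ h)
    (F : Fin 4 → (Fin 4 → ℂ) → ℂ)
    (hF0 : ∀ t : Fin 4 → ℂ, F 0 t = g (zmap t 1, zmap t 2))
    (hF1 : ∀ t : Fin 4 → ℂ, F 1 t = h (zmap t 0, zmap t 3))
    (hF2 : ∀ t : Fin 4 → ℂ,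
      F 2 t = zmap t 2 * pda h (zmap t 0, zmap t 3) + zmap t 1 * pdb h (zmap t 0, zmap t 3))
    (hF3 : ∀ t : Fin 4 → ℂ,
      F 3 t = zmap t 3 * pda g (zmap t 1, zmap t 2) + zmap t 0 * pdb g (zmap t 1, zmap t 2)) :
    ∀ t : Fin 4 → ℂ,
      Dc F 0 t + qI * Dc F 1 t + qJ * Dc F 2 t + qK * Dc F 3 t = 0 := by
  intro t
  obtain ⟨h02, h32, h13, h23⟩ := zSymbol_mul_ee_eq_zero
  obtain ⟨c0, c1, c2, c3⟩ := zSymbol_mul_ee_add_eq_zero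
  rw [Dc_combination_eq_sum_cauchyFueter_mul_ee, Fin.sum_univ_four, funext hF0, funext hF1,
    funext hF2, funext hF3, cauchyFueter_comp_zmap (hg _), cauchyFueter_comp_zmap (hh _),
    cauchyFueter_zmap_mul_pda_add_zmap_mul_pdb hh, cauchyFueter_zmap_mul_pda_add_zmap_mul_pdb hg]
  simp only [add_mul, complex_smul_mul_assoc, h02, h32, h13, h23, smul_zero, add_zero, zero_add]
  linear_combination (norm := module)
    pda g (zmap t 1, zmap t 2) • c0 + pdb g (zmap t 1, zmap t 2) • c1 +
      pda h (zmap t 0, zmap t 3) • c2 + pdb h (zmap t 0, zmap t 3) • c3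
end
end

section
/- Let α_1,α_2,α_3,α_4,λ,μ,θ,ϑ,ν,η ∈ ℂ with α_1α_2 ≠ α_3α_4, and set ψ_1 = α_1e_1 + α_2e_2 + α_3e_3 + α_4e_4, ψ_2 = λα_1e_1 + μα_2e_2 + μα_3e_3 + λα_4e_4, ψ_3 = θα_1e_1 + ϑα_2e_2 + ϑα_3e_3 + θα_4e_4, ψ_4 = να_1e_1 + ηα_2e_2 + ηα_3e_3 + να_4e_4. Suppose f : ℂ⁴ → ℍ(ℂ), f = f_1e_1 + f_2e_2 + f_3e_3 + f_4e_4 with f_1,…,f_4 : ℂ⁴ → ℂ holomorphic, satisfies ψ_1 ∂f/∂z_1 + ψ_2 ∂f/∂z_2 + ψ_3 ∂f/∂z_3 + ψ_4 ∂f/∂z_4 = 0 on ℂ⁴. Then the components f_1 and f_3 satisfy the transport equation ∂u/∂z_1 + λ ∂u/∂z_2 + θ ∂u/∂z_3 + ν ∂u/∂z_4 = 0 on ℂ⁴, and the components f_2 and f_4 satisfy the transport equation ∂u/∂z_1 + μ ∂u/∂z_2 + ϑ ∂u/∂z_3 + η ∂u/∂z_4 = 0 on ℂ⁴. -/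
/-!
Under ℍ(ℂ) ≅ M₂(ℂ) the Cartan basis e₁, e₂, e₃, e₄ goes to the matrix units E₁₁, E₂₂, E₁₂, E₂₁.
Hence ψⱼ = ψ₁ (λⱼ e₁ + μⱼ e₂) with (λⱼ) = (1, λ, θ, ν) and (μⱼ) = (1, μ, ϑ, η), and left
multiplication by λ e₁ + μ e₂ scales the e₁, e₃ coordinates by λ and the e₂, e₄ coordinates by μ.
So the equation reads ψ₁ (T f₁ e₁ + T' f₂ e₂ + T f₃ e₃ + T' f₄ e₄) = 0 with T, T' the two transport
operators, and ψ₁ can be cancelled because its reduced norm is its determinant α₁α₂ − α₃α₄ ≠ 0.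
-/

noncomputable section

open Quaternion

theorem Quaternion.eq_zero_of_mul_eq_zero_of_normSq_ne_zero {R : Type*} [Field R] {a x : ℍ[R]}
    (ha : normSq a ≠ 0) (h : a * x = 0) : x = 0 :=
  calc x = (((normSq a)⁻¹ : R) : ℍ[R]) * (star a * a) * x := by
        rw [star_mul_self, ← coe_mul, inv_mul_cancel₀ ha, coe_one, one_mul]
    _ = 0 := by rw [mul_assoc, mul_assoc, h, mul_zero, mul_zero]

section Cartan

variable (p₀ p₁ p₂ p₃ : ℂ)

theorem cartan_re : (p₀ • ee 0 + p₁ • ee 1 + p₂ • ee 2 + p₃ • ee 3).re = (p₀ + p₁) / 2 := by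
  simp only [ee, Fin.isValue, Matrix.cons_val_zero, Matrix.cons_val_one, Matrix.cons_val, smul_add,
    re_add, re_sub, re_smul, re_one, smul_eq_mul]
  simp only [qI, qJ, qK]
  ring

theorem cartan_imI :
    (p₀ • ee 0 + p₁ • ee 1 + p₂ • ee 2 + p₃ • ee 3).imI = Complex.I * (p₀ - p₁) / 2 := by
  simp only [ee, Fin.isValue, Matrix.cons_val_zero, Matrix.cons_val_one, Matrix.cons_val, smul_add,
    imI_add, imI_sub, imI_smul, imI_one, smul_eq_mul]
  simp only [qI, qJ, qK]
  ring

theorem cartan_imJ :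
    (p₀ • ee 0 + p₁ • ee 1 + p₂ • ee 2 + p₃ • ee 3).imJ = Complex.I * (p₂ + p₃) / 2 := by
  simp only [ee, Fin.isValue, Matrix.cons_val_zero, Matrix.cons_val_one, Matrix.cons_val, smul_add,
    imJ_add, imJ_sub, imJ_smul, imJ_one, smul_eq_mul]
  simp only [qI, qJ, qK]
  ring

theorem cartan_imK : (p₀ • ee 0 + p₁ • ee 1 + p₂ • ee 2 + p₃ • ee 3).imK = (p₃ - p₂) / 2 := by
  simp only [ee, Fin.isValue, Matrix.cons_val_zero, Matrix.cons_val_one, Matrix.cons_val, smul_add,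
    imK_add, imK_sub, imK_smul, imK_one, smul_eq_mul]
  simp only [qI, qJ, qK]
  ring

theorem normSq_cartan :
    normSq (p₀ • ee 0 + p₁ • ee 1 + p₂ • ee 2 + p₃ • ee 3) = p₀ * p₁ - p₂ * p₃ := by
  rw [normSq_def']
  simp only [cartan_re, cartan_imI, cartan_imJ, cartan_imK]
  linear_combination ((p₀ - p₁) ^ 2 + (p₂ + p₃) ^ 2) / 4 * Complex.I_sq

end Cartan

theorem cartan_eq_zero_iff {p₀ p₁ p₂ p₃ : ℂ} :
    p₀ • ee 0 + p₁ • ee 1 + p₂ • ee 2 + p₃ • ee 3 = 0 ↔ p₀ = 0 ∧ p₁ = 0 ∧ p₂ = 0 ∧ p₃ = 0 := by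
  simp only [Quaternion.ext_iff, cartan_re, cartan_imI, cartan_imJ, cartan_imK, re_zero, imI_zero,
    imJ_zero, imK_zero, div_eq_zero_iff, mul_eq_zero, Complex.I_ne_zero, false_or, two_ne_zero,
    or_false]
  constructor
  · rintro ⟨h₀, h₁, h₂, h₃⟩
    exact ⟨by linear_combination (h₀ + h₁) / 2, by linear_combination (h₀ - h₁) / 2,
      by linear_combination (h₂ - h₃) / 2, by linear_combination (h₂ + h₃) / 2⟩
  · rintro ⟨rfl, rfl, rfl, rfl⟩
    norm_num

theorem cartan_mul_cartan (a₀ a₁ a₂ a₃ b₀ b₁ b₂ b₃ : ℂ) :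
    (a₀ • ee 0 + a₁ • ee 1 + a₂ • ee 2 + a₃ • ee 3) * (b₀ • ee 0 + b₁ • ee 1 + b₂ • ee 2 + b₃ • ee 3) =
      (a₀ * b₀ + a₂ * b₃) • ee 0 + (a₁ * b₁ + a₃ * b₂) • ee 1 + (a₀ * b₂ + a₂ * b₁) • ee 2 +
        (a₃ * b₀ + a₁ * b₃) • ee 3 := by
  ext <;>
  simp only [re_mul, imI_mul, imJ_mul, imK_mul, cartan_re, cartan_imI, cartan_imJ, cartan_imK] <;>
  ring_nf <;> simp only [Complex.I_sq] <;> ring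

theorem diag_eq_cartan (c d : ℂ) :
    c • ee 0 + d • ee 1 = c • ee 0 + d • ee 1 + (0 : ℂ) • ee 2 + (0 : ℂ) • ee 3 := by
  module

theorem cartan_diag_mul (c d p₀ p₁ p₂ p₃ : ℂ) :
    (c • ee 0 + d • ee 1) * (p₀ • ee 0 + p₁ • ee 1 + p₂ • ee 2 + p₃ • ee 3) =
      (c * p₀) • ee 0 + (d * p₁) • ee 1 + (c * p₂) • ee 2 + (d * p₃) • ee 3 := by
  rw [diag_eq_cartan, cartan_mul_cartan]
  module

theorem cartan_mul_diag (a₀ a₁ a₂ a₃ c d : ℂ) :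
    (a₀ • ee 0 + a₁ • ee 1 + a₂ • ee 2 + a₃ • ee 3) * (c • ee 0 + d • ee 1) =
      (c * a₀) • ee 0 + (d * a₁) • ee 1 + (d * a₂) • ee 2 + (c * a₃) • ee 3 := by
  rw [diag_eq_cartan c d, cartan_mul_cartan]
  module

def transport (c₁ c₂ c₃ : ℂ) (u : (Fin 4 → ℂ) → ℂ) (z : Fin 4 → ℂ) : ℂ :=
  pd 0 u z + c₁ * pd 1 u z + c₂ * pd 2 u z + c₃ * pd 3 u z

theorem components_satisfy_transport_equations_general
    (a1 a2 a3 a4 lam mu th vth nu eta : ℂ) (ha : a1 * a2 ≠ a3 * a4)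
    (ψ1 ψ2 ψ3 ψ4 : ℍ[ℂ])
    (hψ1 : ψ1 = a1 • ee 0 + a2 • ee 1 + a3 • ee 2 + a4 • ee 3)
    (hψ2 : ψ2 = (lam * a1) • ee 0 + (mu * a2) • ee 1 + (mu * a3) • ee 2 + (lam * a4) • ee 3)
    (hψ3 : ψ3 = (th * a1) • ee 0 + (vth * a2) • ee 1 + (vth * a3) • ee 2 + (th * a4) • ee 3)
    (hψ4 : ψ4 = (nu * a1) • ee 0 + (eta * a2) • ee 1 + (eta * a3) • ee 2 + (nu * a4) • ee 3)
    (f : Fin 4 → (Fin 4 → ℂ) → ℂ)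
    (heq : ∀ z : Fin 4 → ℂ,
      ψ1 * Dc f 0 z + ψ2 * Dc f 1 z + ψ3 * Dc f 2 z + ψ4 * Dc f 3 z = 0) :
    (∀ z : Fin 4 → ℂ,
      pd 0 (f 0) z + lam * pd 1 (f 0) z + th * pd 2 (f 0) z + nu * pd 3 (f 0) z = 0) ∧
    (∀ z : Fin 4 → ℂ,
      pd 0 (f 2) z + lam * pd 1 (f 2) z + th * pd 2 (f 2) z + nu * pd 3 (f 2) z = 0) ∧
    (∀ z : Fin 4 → ℂ,
      pd 0 (f 1) z + mu * pd 1 (f 1) z + vth * pd 2 (f 1) z + eta * pd 3 (f 1) z = 0) ∧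
    (∀ z : Fin 4 → ℂ,
      pd 0 (f 3) z + mu * pd 1 (f 3) z + vth * pd 2 (f 3) z + eta * pd 3 (f 3) z = 0) := by
  have hψ1_normSq : normSq ψ1 ≠ 0 := by rw [hψ1, normSq_cartan]; exact sub_ne_zero.mpr ha
  obtain ⟨hψ2', hψ3', hψ4'⟩ : ψ2 = ψ1 * (lam • ee 0 + mu • ee 1) ∧
      ψ3 = ψ1 * (th • ee 0 + vth • ee 1) ∧ ψ4 = ψ1 * (nu • ee 0 + eta • ee 1) := by
    simp only [hψ1, hψ2, hψ3, hψ4, cartan_mul_diag, and_self]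
  have key (z : Fin 4 → ℂ) :
      transport lam th nu (f 0) z • ee 0 + transport mu vth eta (f 1) z • ee 1 +
        transport lam th nu (f 2) z • ee 2 + transport mu vth eta (f 3) z • ee 3 = 0 := by
    refine Quaternion.eq_zero_of_mul_eq_zero_of_normSq_ne_zero hψ1_normSq ?_
    calc _ = ψ1 * (Dc f 0 z + (lam • ee 0 + mu • ee 1) * Dc f 1 z +
          (th • ee 0 + vth • ee 1) * Dc f 2 z + (nu • ee 0 + eta • ee 1) * Dc f 3 z) := by
          congr 1
          simp only [transport, Dc, Fin.sum_univ_four, cartan_diag_mul]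
          module
      _ = ψ1 * Dc f 0 z + ψ2 * Dc f 1 z + ψ3 * Dc f 2 z + ψ4 * Dc f 3 z := by
          rw [hψ2', hψ3', hψ4', mul_add, mul_add, mul_add, mul_assoc, mul_assoc, mul_assoc]
      _ = 0 := heq z
  simp only [cartan_eq_zero_iff, transport] at key
  exact ⟨fun z => (key z).1, fun z => (key z).2.2.1, fun z => (key z).2.1, fun z => (key z).2.2.2⟩

/-- if `f = f₁e₁ + f₂e₂ + f₃e₃ + f₄e₄` is left-ψ-hyperholomorphic
for the special weights ψ₁,ψ₂,ψ₃,ψ₄ (with `α₁α₂ ≠ α₃α₄`), then `f₁, f₃` satisfy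
the transport equation `∂u/∂z₁ + λ ∂u/∂z₂ + θ ∂u/∂z₃ + ν ∂u/∂z₄ = 0` and
`f₂, f₄` satisfy `∂u/∂z₁ + μ ∂u/∂z₂ + ϑ ∂u/∂z₃ + η ∂u/∂z₄ = 0`
(everything indexed from 0). -/
theorem components_satisfy_transport_equations
    (a1 a2 a3 a4 lam mu th vth nu eta : ℂ) (ha : a1 * a2 ≠ a3 * a4)
    (ψ1 ψ2 ψ3 ψ4 : ℍ[ℂ])
    (hψ1 : ψ1 = a1 • ee 0 + a2 • ee 1 + a3 • ee 2 + a4 • ee 3)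
    (hψ2 : ψ2 = (lam * a1) • ee 0 + (mu * a2) • ee 1 + (mu * a3) • ee 2 + (lam * a4) • ee 3)
    (hψ3 : ψ3 = (th * a1) • ee 0 + (vth * a2) • ee 1 + (vth * a3) • ee 2 + (th * a4) • ee 3)
    (hψ4 : ψ4 = (nu * a1) • ee 0 + (eta * a2) • ee 1 + (eta * a3) • ee 2 + (nu * a4) • ee 3)
    (f : Fin 4 → (Fin 4 → ℂ) → ℂ) (hf : ∀ k, Differentiable ℂ (f k))
    (heq : ∀ z : Fin 4 → ℂ,
      ψ1 * Dc f 0 z + ψ2 * Dc f 1 z + ψ3 * Dc f 2 z + ψ4 * Dc f 3 z = 0) :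
    (∀ z : Fin 4 → ℂ,
      pd 0 (f 0) z + lam * pd 1 (f 0) z + th * pd 2 (f 0) z + nu * pd 3 (f 0) z = 0) ∧
    (∀ z : Fin 4 → ℂ,
      pd 0 (f 2) z + lam * pd 1 (f 2) z + th * pd 2 (f 2) z + nu * pd 3 (f 2) z = 0) ∧
    (∀ z : Fin 4 → ℂ,
      pd 0 (f 1) z + mu * pd 1 (f 1) z + vth * pd 2 (f 1) z + eta * pd 3 (f 1) z = 0) ∧
    (∀ z : Fin 4 → ℂ,
      pd 0 (f 3) z + mu * pd 1 (f 3) z + vth * pd 2 (f 3) z + eta * pd 3 (f 3) z = 0) :=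
  components_satisfy_transport_equations_general a1 a2 a3 a4 lam mu th vth nu eta ha ψ1 ψ2 ψ3 ψ4 hψ1
    hψ2 hψ3 hψ4 f heq
end
end

section
/- Let Ω ⊆ ℂ² be open, regard ζ = z_1 e_1 + z_2 e_2 for (z_1,z_2) ∈ Ω as a bicomplex variable, and let f : Ω → ℍ(ℂ) have holomorphic components. Suppose f is right-𝔹ℂ-hyperholomorphic, i.e. there exists f'_r : Ω → ℍ(ℂ) such that for every h = h_1 e_1 + h_2 e_2 with h_1,h_2 ∈ ℂ, the limit as the complex parameter ε → 0 (ε ≠ 0) of ε⁻¹ ( f(ζ + εh) − f(ζ) ) exists and equals h · f'_r(ζ) for every ζ ∈ Ω. Then f satisfies the Cauchy–Riemann type condition e_2 ∂f/∂z_1 = e_1 ∂f/∂z_2 on Ω; equivalently, f satisfies the left-ψ-hyperholomorphy equation with ψ_1 = e_2, ψ_2 = −e_1, ψ_3 = ψ_4 = 0. -/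
/-!
Along the bicomplex direction `h = h₁e₁ + h₂e₂` the difference quotient of `f` tends to the
directional derivative `h₁ ∂f/∂z₁ + h₂ ∂f/∂z₂`, so right hyperholomorphy gives
`h · f'_r = h₁ ∂f/∂z₁ + h₂ ∂f/∂z₂`. Taking `h = e₁` and `h = e₂` yields `∂f/∂z₁ = e₁ f'_r` and
`∂f/∂z₂ = e₂ f'_r`; since `e₁e₂ = e₂e₁ = 0`, both `e₂ ∂f/∂z₁` and `e₁ ∂f/∂z₂` vanish.
-/

noncomputable section

open Quaternion

open Filter Topology

lemma ee_zero_mul_ee_one : ee 0 * ee 1 = 0 := by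
  ext <;> simp [ee] <;> simp [qI] <;> grind [Complex.I_mul_I]

lemma ee_one_mul_ee_zero : ee 1 * ee 0 = 0 := by
  ext <;> simp [ee] <;> simp [qI] <;> grind [Complex.I_mul_I]

section Slope

variable {𝕜 E W ι : Type*} [NontriviallyNormedField 𝕜] [NormedAddCommGroup E] [NormedSpace 𝕜 E]
  [NormedAddCommGroup W] [NormedSpace 𝕜 W] [Fintype ι]

theorem tendsto_slope_sum_smul {u : ι → E → 𝕜} (b : ι → W) {p : E} (hu : ∀ k, DifferentiableAt 𝕜 (u k) p) (v : E) :
    Tendsto (fun t : 𝕜 => t⁻¹ • (∑ k, u k (p + t • v) • b k - ∑ k, u k p • b k)) (𝓝[≠] 0)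
      (𝓝 (∑ k, fderiv 𝕜 (u k) p v • b k)) := by
  have hsum : HasFDerivAt (fun q => ∑ k, u k q • b k)
      (∑ k, (fderiv 𝕜 (u k) p).smulRight (b k)) p :=
    HasFDerivAt.fun_sum fun k _ => (hu k).hasFDerivAt.smul_const (b k)
  simpa using hasLineDerivAt_iff_tendsto_slope_zero.mp (hsum.hasLineDerivAt v)

theorem LinearMap.eq_sum_fderiv_smul_of_tendsto_slope {A : Type*} [AddCommGroup A] [Module 𝕜 A]
    (T : A →ₗ[𝕜] W) (hT : Function.Injective T)
    {u : ι → E → 𝕜} (b : ι → A) {p : E} (hu : ∀ k, DifferentiableAt 𝕜 (u k) p) (v : E) {q : A}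
    (hq : Tendsto (fun t : 𝕜 => T (t⁻¹ • (∑ k, u k (p + t • v) • b k - ∑ k, u k p • b k)))
      (𝓝[≠] 0) (𝓝 (T q))) :
    q = ∑ k, fderiv 𝕜 (u k) p v • b k := by
  apply hT
  refine tendsto_nhds_unique hq ?_
  simpa only [map_smul, map_sub, map_sum] using tendsto_slope_sum_smul (fun k => T (b k)) hu v

end Slope

/-- a right-𝔹ℂ-hyperholomorphic function `f(ζ) = Σ fₖ(z₁,z₂) eₖ`
(the limit of `ε⁻¹(f(ζ+εh) - f(ζ))` exists and equals `h ⬝ f'_r(ζ)` for every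
`h = h₁e₁ + h₂e₂ ∈ 𝔹ℂ`, the limit being taken componentwise via the linear
identification of ℍ(ℂ) with ℂ⁴) satisfies `e₂ ∂f/∂z₁ = e₁ ∂f/∂z₂` on Ω; equivalently
it is left-ψ-hyperholomorphic with `ψ₁ = e₂, ψ₂ = -e₁, ψ₃ = ψ₄ = 0`. -/
theorem right_BC_hyperholomorphic_satisfies_CR
    (Ω : Set (ℂ × ℂ)) (hΩ : IsOpen Ω)
    (f : Fin 4 → ℂ × ℂ → ℂ) (hf : ∀ k, DifferentiableOn ℂ (f k) Ω)
    (F : ℂ × ℂ → ℍ[ℂ]) (hF : ∀ p, F p = ∑ k, f k p • ee k)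
    (fr : ℂ × ℂ → ℍ[ℂ])
    (hfr : ∀ p ∈ Ω, ∀ h1 h2 : ℂ,
      Filter.Tendsto
        (fun ε : ℂ => QuaternionAlgebra.equivTuple (-1 : ℂ) (0 : ℂ) (-1 : ℂ)
          (ε⁻¹ • (F (p.1 + ε * h1, p.2 + ε * h2) - F p)))
        (nhdsWithin 0 {(0 : ℂ)}ᶜ)
        (nhds (QuaternionAlgebra.equivTuple (-1 : ℂ) (0 : ℂ) (-1 : ℂ)
          ((h1 • ee 0 + h2 • ee 1) * fr p)))) :
    ∀ p ∈ Ω,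
      ee 1 * (∑ k, pda (f k) p • ee k) = ee 0 * (∑ k, pdb (f k) p • ee k) ∧
      ee 1 * (∑ k, pda (f k) p • ee k) + (-(ee 0)) * (∑ k, pdb (f k) p • ee k) = 0 := by
  intro p hp
  have hdiff : ∀ k, DifferentiableAt ℂ (f k) p := fun k =>
    (hf k).differentiableAt (hΩ.mem_nhds hp)
  have hmul : ∀ h1 h2 : ℂ, (h1 • ee 0 + h2 • ee 1) * fr p =
      ∑ k, fderiv ℂ (f k) p (h1, h2) • ee k := by
    intro h1 h2
    have hslope := hfr p hp h1 h2
    simp only [hF] at hslope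
    -- `(p.1 + ε * h1, p.2 + ε * h2)` is `p + ε • (h1, h2)` by definition
    exact (QuaternionAlgebra.linearEquivTuple _ _ _).toLinearMap.eq_sum_fderiv_smul_of_tendsto_slope
      (QuaternionAlgebra.linearEquivTuple _ _ _).injective ee hdiff (h1, h2) hslope
  have hpda : ee 0 * fr p = ∑ k, pda (f k) p • ee k := by
    simpa [pda, zero_smul ℂ (ee 1)] using hmul 1 0
  have hpdb : ee 1 * fr p = ∑ k, pdb (f k) p • ee k := by
    simpa [pdb, zero_smul ℂ (ee 0)] using hmul 0 1
  have hpda_zero : ee 1 * ∑ k, pda (f k) p • ee k = 0 := by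
    rw [← hpda, ← mul_assoc, ee_one_mul_ee_zero, zero_mul]
  have hpdb_zero : ee 0 * ∑ k, pdb (f k) p • ee k = 0 := by
    rw [← hpdb, ← mul_assoc, ee_zero_mul_ee_one, zero_mul]
  refine ⟨hpda_zero.trans hpdb_zero.symm, ?_⟩
  rw [hpda_zero, zero_add, neg_mul (ee 0), hpdb_zero, neg_zero]
end
end

section
/- Let Ω ⊆ ℂ² be open, regard ζ = z_1 e_1 + z_2 e_2 for (z_1,z_2) ∈ Ω as a bicomplex variable, and let f : Ω → ℍ(ℂ) have holomorphic components. Suppose f is left-𝔹ℂ-hyperholomorphic, i.e. there exists f'_l : Ω → ℍ(ℂ) such that for every h = h_1 e_1 + h_2 e_2 with h_1,h_2 ∈ ℂ, the limit as the complex parameter ε → 0 (ε ≠ 0) of ε⁻¹ ( f(ζ + εh) − f(ζ) ) exists and equals f'_l(ζ) · h for every ζ ∈ Ω. Then f satisfies the Cauchy–Riemann type condition (∂f/∂z_1) e_2 = (∂f/∂z_2) e_1 on Ω; equivalently, f satisfies the right-ψ-hyperholomorphy equation (∂f/∂z_1) ψ_1 + (∂f/∂z_2) ψ_2 = 0 with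 ψ_1 = e_2, ψ_2 = −e_1. -/
noncomputable section

open Quaternion

/-!
Taking `h = e₁` and `h = e₂` in the definition of left-𝔹ℂ-hyperholomorphy, the difference
quotients become the slopes of the holomorphic Cartan components along the coordinate axes, so
`∂f/∂z₁ = f'_l e₁` and `∂f/∂z₂ = f'_l e₂`. Both sides of `(∂f/∂z₁) e₂ = (∂f/∂z₂) e₁` then vanish,
because the idempotents `e₁, e₂` annihilate each other.
-/

open Filter Topology

section

variable {𝕜 E G ι : Type*} [NontriviallyNormedField 𝕜] [NormedAddCommGroup E] [NormedSpace 𝕜 E]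
  [NormedAddCommGroup G] [NormedSpace 𝕜 G] [Fintype ι]

theorem hasLineDerivAt_sum_smul {f : ι → E → 𝕜} {p : E} (hf : ∀ k, DifferentiableAt 𝕜 (f k) p)
    (b : ι → G) (v : E) :
    HasLineDerivAt 𝕜 (fun q ↦ ∑ k, f k q • b k) (∑ k, fderiv 𝕜 (f k) p v • b k) p v :=
  HasDerivAt.fun_sum fun k _ ↦ ((hf k).hasFDerivAt.hasLineDerivAt v).smul_const (b k)

theorem QuaternionAlgebra.tendsto_equivTuple_slope_sum_smul {c₁ c₂ c₃ : 𝕜} {f : ι → E → 𝕜}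
    {p : E} (hf : ∀ k, DifferentiableAt 𝕜 (f k) p) (b : ι → ℍ[𝕜,c₁,c₂,c₃]) (v : E) :
    Tendsto (fun ε : 𝕜 ↦ QuaternionAlgebra.equivTuple c₁ c₂ c₃
        (ε⁻¹ • ((∑ k, f k (p + ε • v) • b k) - ∑ k, f k p • b k)))
      (𝓝[≠] 0) (𝓝 (QuaternionAlgebra.equivTuple c₁ c₂ c₃ (∑ k, fderiv 𝕜 (f k) p v • b k))) := by
  simp only [← QuaternionAlgebra.coe_linearEquivTuple, map_smul, map_sub, map_sum]
  exact (hasLineDerivAt_sum_smul hf _ v).tendsto_slope_zero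

end

/-- a left-𝔹ℂ-hyperholomorphic function `f(ζ) = Σ fₖ(z₁,z₂) eₖ`
(the limit of `ε⁻¹(f(ζ+εh) - f(ζ))` exists and equals `f'_l(ζ) ⬝ h` for every
`h = h₁e₁ + h₂e₂ ∈ 𝔹ℂ`, the limit being taken componentwise via the linear
identification of ℍ(ℂ) with ℂ⁴) satisfies `(∂f/∂z₁) e₂ = (∂f/∂z₂) e₁` on Ω;
equivalently it is right-ψ-hyperholomorphic with `ψ₁ = e₂, ψ₂ = -e₁`. -/
theorem left_BC_hyperholomorphic_satisfies_CR
    (Ω : Set (ℂ × ℂ)) (hΩ : IsOpen Ω)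
    (f : Fin 4 → ℂ × ℂ → ℂ) (hf : ∀ k, DifferentiableOn ℂ (f k) Ω)
    (F : ℂ × ℂ → ℍ[ℂ]) (hF : ∀ p, F p = ∑ k, f k p • ee k)
    (fl : ℂ × ℂ → ℍ[ℂ])
    (hfl : ∀ p ∈ Ω, ∀ h1 h2 : ℂ,
      Filter.Tendsto
        (fun ε : ℂ => QuaternionAlgebra.equivTuple (-1 : ℂ) (0 : ℂ) (-1 : ℂ)
          (ε⁻¹ • (F (p.1 + ε * h1, p.2 + ε * h2) - F p)))
        (nhdsWithin 0 {(0 : ℂ)}ᶜ)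
        (nhds (QuaternionAlgebra.equivTuple (-1 : ℂ) (0 : ℂ) (-1 : ℂ)
          (fl p * (h1 • ee 0 + h2 • ee 1))))) :
    ∀ p ∈ Ω,
      (∑ k, pda (f k) p • ee k) * ee 1 = (∑ k, pdb (f k) p • ee k) * ee 0 ∧
      (∑ k, pda (f k) p • ee k) * ee 1 + (∑ k, pdb (f k) p • ee k) * (-(ee 0)) = 0 := by
  intro p hp
  have hdiff k : DifferentiableAt ℂ (f k) p := (hf k).differentiableAt (hΩ.mem_nhds hp)
  have hderiv (h1 h2 : ℂ) :
      ∑ k, fderiv ℂ (f k) p (h1, h2) • ee k = fl p * (h1 • ee 0 + h2 • ee 1) := by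
    refine (QuaternionAlgebra.equivTuple _ _ _).injective (tendsto_nhds_unique ?_ (hfl p hp h1 h2))
    simp only [hF]
    exact QuaternionAlgebra.tendsto_equivTuple_slope_sum_smul hdiff ee (h1, h2)
  have hpda : ∑ k, pda (f k) p • ee k = fl p * ee 0 := by
    simpa [pda, zero_smul ℂ (ee 1)] using hderiv 1 0
  have hpdb : ∑ k, pdb (f k) p • ee k = fl p * ee 1 := by
    simpa [pdb, zero_smul ℂ (ee 0)] using hderiv 0 1
  simp [hpda, hpdb, mul_assoc, ee_zero_mul_ee_one, ee_one_mul_ee_zero, mul_neg (ee 1) (ee 0)]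
end
end
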